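/- arXiv:2511.20876 — 2 statements merged into one kernel-verified Lean document; each statement's English description precedes it below -/
import Mathlib

section
/- If (Z₁, Z₂) is bivariate Gaussian with standard normal marginals and correlation r, then Kendall's tau between Z₁ and Z₂ satisfies τ = (2/π)·arcsin(r). -/
/-!
Put `α = arcsin r`, so that `r = sin α` and `√(1 - r²) = cos α`. With `X = Z₁ - Z₁'` and
`Y = W - W'`, the product `(Z₁ - Z₁')(Z₂ - Z₂')` equals `X (sin α X + cos α Y)`, and `X`, `Y` are
independent `N(0, 2)` variables. Their joint law has a radial density, so it gives a cone the
mass of its opening angle divided by `2π`. The event `X (sin α X + cos α Y) > 0` is the sector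
`θ ∈ (-α, π/2)` together with its reflection through the origin, of probability `(π/2 + α)/π`;
likewise the opposite event has probability `(π/2 - α)/π`, and the difference is `2α/π`.
-/

open MeasureTheory ProbabilityTheory Real Set
open scoped NNReal ENNReal Pointwise

namespace MeasureTheory.Measure

variable {α β γ δ : Type*} [MeasurableSpace α] [MeasurableSpace β] [MeasurableSpace γ]
  [MeasurableSpace δ]

@[fun_prop]
theorem _root_.measurable_prodProdProdComm : Measurable (Equiv.prodProdProdComm α β γ δ) := by
  simp only [Equiv.prodProdProdComm, Equiv.coe_fn_mk]; fun_prop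

theorem map_prodProdProdComm_prod (μα : Measure α) (μβ : Measure β) (μγ : Measure γ)
    (μδ : Measure δ) [SigmaFinite μα] [SigmaFinite μβ] [SigmaFinite μγ] [SigmaFinite μδ] :
    ((μα.prod μβ).prod (μγ.prod μδ)).map (Equiv.prodProdProdComm α β γ δ) =
      (μα.prod μγ).prod (μβ.prod μδ) := by
  refine (prod_eq_generateFrom generateFrom_prod generateFrom_prod isPiSystem_prod isPiSystem_prod
    (μα.toFiniteSpanningSetsIn.prod μγ.toFiniteSpanningSetsIn)
    (μβ.toFiniteSpanningSetsIn.prod μδ.toFiniteSpanningSetsIn) ?_).symm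
  rintro _ ⟨s₁, hs₁, s₃, hs₃, rfl⟩ _ ⟨s₂, hs₂, s₄, hs₄, rfl⟩
  have hpre : Equiv.prodProdProdComm α β γ δ ⁻¹' ((s₁ ×ˢ s₃) ×ˢ (s₂ ×ˢ s₄)) =
      (s₁ ×ˢ s₂) ×ˢ (s₃ ×ˢ s₄) := by
    ext; simp [and_assoc, and_left_comm]
  rw [map_apply measurable_prodProdProdComm ((hs₁.prod hs₃).prod (hs₂.prod hs₄)), hpre,
    prod_prod, prod_prod, prod_prod, prod_prod, prod_prod]
  ring

end MeasureTheory.Measure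

namespace Real

theorem sin_pos_iff_of_mem_Ioo {x : ℝ} (hx : x ∈ Ioo (-π) π) : 0 < sin x ↔ 0 < x := by
  refine ⟨fun h => ?_, fun h => sin_pos_of_pos_of_lt_pi h hx.2⟩
  by_contra! hx0
  exact (sin_nonpos_of_nonpos_of_neg_pi_le hx0 hx.1.le).not_gt h

theorem cos_pos_iff_of_mem_Ioo {x : ℝ} (hx : x ∈ Ioo (-π) π) :
    0 < cos x ↔ x ∈ Ioo (-(π / 2)) (π / 2) := by
  refine ⟨fun h => ⟨?_, ?_⟩, cos_pos_of_mem_Ioo⟩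
  · by_contra! hx'
    have := cos_nonpos_of_pi_div_two_le_of_le (x := -x) (by linarith) (by linarith [hx.1])
    rw [cos_neg] at this
    linarith
  · by_contra! hx'
    have := cos_nonpos_of_pi_div_two_le_of_le hx' (by linarith [hx.2])
    linarith

theorem sin_mul_mul_cos_add_cos_mul_mul_sin (α ρ θ : ℝ) :
    sin α * (ρ * cos θ) + cos α * (ρ * sin θ) = ρ * sin (θ + α) := by
  rw [sin_add]; ring

end Real

namespace MeasureTheory

theorem withDensity_radial_apply {f : ℝ → ℝ≥0∞} (hf : Measurable f) {A : Set (ℝ × ℝ)}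
    (hA : MeasurableSet A) {S : Set ℝ} (hS : MeasurableSet S) (hSπ : S ⊆ Ioo (-π) π)
    (hAS : ∀ ρ θ, 0 < ρ → θ ∈ Ioo (-π) π → ((ρ * cos θ, ρ * sin θ) ∈ A ↔ θ ∈ S)) :
    volume.withDensity (fun p : ℝ × ℝ => f (p.1 ^ 2 + p.2 ^ 2)) A =
      (∫⁻ ρ in Ioi 0, ENNReal.ofReal ρ * f (ρ ^ 2)) * volume S := by
  have htarget : polarCoord.target = Ioi (0 : ℝ) ×ˢ Ioo (-π) π := rfl
  rw [withDensity_apply _ hA, ← lintegral_indicator hA, ← lintegral_comp_polarCoord_symm, htarget]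
  calc _ = ∫⁻ p in Ioi (0 : ℝ) ×ˢ Ioo (-π) π,
          ENNReal.ofReal p.1 * f (p.1 ^ 2) * S.indicator 1 p.2 := by
        refine setLIntegral_congr_fun (measurableSet_Ioi.prod measurableSet_Ioo) ?_
        rintro ⟨ρ, θ⟩ ⟨hρ, hθ⟩
        have hnorm : (ρ * cos θ) ^ 2 + (ρ * sin θ) ^ 2 = ρ ^ 2 := by
          rw [mul_pow, mul_pow, ← mul_add, cos_sq_add_sin_sq, mul_one]
        by_cases hθS : θ ∈ S
        · simp [indicator_of_mem ((hAS ρ θ hρ hθ).mpr hθS), hθS, hnorm]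
        · simp [indicator_of_notMem (mt (hAS ρ θ hρ hθ).mp hθS), hθS]
    _ = (∫⁻ ρ in Ioi 0, ENNReal.ofReal ρ * f (ρ ^ 2)) * ∫⁻ θ in Ioo (-π) π, S.indicator 1 θ := by
        rw [Measure.volume_eq_prod, ← Measure.prod_restrict,
          lintegral_prod_mul (f := fun ρ => ENNReal.ofReal ρ * f (ρ ^ 2)) (by fun_prop)
            (measurable_one.indicator hS).aemeasurable]
    _ = _ := by rw [lintegral_indicator_one hS, Measure.restrict_apply hS, inter_eq_left.mpr hSπ]

theorem withDensity_radial_apply_eq_div {f : ℝ → ℝ≥0∞} (hf : Measurable f)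
    [IsProbabilityMeasure (volume.withDensity fun p : ℝ × ℝ => f (p.1 ^ 2 + p.2 ^ 2))]
    {A : Set (ℝ × ℝ)} (hA : MeasurableSet A) {S : Set ℝ} (hS : MeasurableSet S)
    (hSπ : S ⊆ Ioo (-π) π)
    (hAS : ∀ ρ θ, 0 < ρ → θ ∈ Ioo (-π) π → ((ρ * cos θ, ρ * sin θ) ∈ A ↔ θ ∈ S)) :
    volume.withDensity (fun p : ℝ × ℝ => f (p.1 ^ 2 + p.2 ^ 2)) A =
      volume S / ENNReal.ofReal (2 * π) := by
  have hmass := withDensity_radial_apply hf MeasurableSet.univ measurableSet_Ioo subset_rfl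
    fun _ θ _ hθ => by simp [hθ]
  rw [measure_univ, Real.volume_Ioo, show π - -π = 2 * π by ring] at hmass
  rw [withDensity_radial_apply hf hA hS hSπ hAS, ENNReal.eq_inv_of_mul_eq_one_left hmass.symm,
    ENNReal.div_eq_inv_mul]

theorem measure_setOf_mul_pos {G : Type*} [InvolutiveNeg G] [MeasurableSpace G]
    [MeasurableNeg G] (ν : Measure G) [ν.IsNegInvariant] {f g : G → ℝ} (hf : Measurable f)
    (hg : Measurable g) (hf_neg : ∀ x, f (-x) = -f x) (hg_neg : ∀ x, g (-x) = -g x) :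
    ν {x | 0 < f x * g x} = 2 * ν {x | 0 < f x ∧ 0 < g x} := by
  set A := {x | 0 < f x ∧ 0 < g x}
  have hA : MeasurableSet A :=
    (measurableSet_lt measurable_const hf).inter (measurableSet_lt measurable_const hg)
  have hunion : {x | 0 < f x * g x} = A ∪ -A := by
    ext x
    simp [A, mul_pos_iff, hf_neg, hg_neg]
  have hdisj : Disjoint A (-A) := by
    refine Set.disjoint_left.mpr fun x hx hx' => ?_
    simp only [A, mem_neg, mem_ofPred_eq, hf_neg] at hx hx'
    linarith [hx.1, hx'.1]
  rw [hunion, measure_union hdisj hA.neg, Measure.measure_neg, two_mul]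

end MeasureTheory

namespace ProbabilityTheory

theorem gaussianReal_prod_map_sub (m₁ m₂ : ℝ) (v₁ v₂ : ℝ≥0) :
    ((gaussianReal m₁ v₁).prod (gaussianReal m₂ v₂)).map (fun q => q.1 - q.2) =
      gaussianReal (m₁ - m₂) (v₁ + v₂) := by
  have h : (fun q : ℝ × ℝ => q.1 - q.2) = (fun q => q.1 + q.2) ∘ Prod.map id (fun x => -x) := by
    ext q; simp [sub_eq_add_neg]
  rw [h, ← Measure.map_map (by fun_prop) (by fun_prop), ← Measure.map_prod_map _ _ measurable_id
    measurable_neg, Measure.map_id, gaussianReal_map_neg, ← Measure.conv,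
    gaussianReal_conv_gaussianReal, sub_eq_add_neg]

theorem IndepFun.map_prod_sub_prod_sub {Ω G H : Type*} [MeasurableSpace Ω] [MeasurableSpace G]
    [MeasurableSpace H] [AddGroup G] [AddGroup H] [MeasurableSub₂ G] [MeasurableSub₂ H]
    {μ : Measure Ω} [IsProbabilityMeasure μ] {X : Ω → G} {Y : Ω → H}
    (hX : Measurable X) (hY : Measurable Y) (hXY : IndepFun X Y μ) :
    (μ.prod μ).map (fun p => (X p.1 - X p.2, Y p.1 - Y p.2)) =
      (((μ.map X).prod (μ.map X)).map (fun q => q.1 - q.2)).prod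
        (((μ.map Y).prod (μ.map Y)).map (fun q => q.1 - q.2)) := by
  have hjoint : μ.map (fun ω => (X ω, Y ω)) = (μ.map X).prod (μ.map Y) :=
    (indepFun_iff_map_prod_eq_prod_map_map hX.aemeasurable hY.aemeasurable).mp hXY
  have hsubG : Measurable (fun q : G × G => q.1 - q.2) := measurable_sub
  have hsubH : Measurable (fun q : H × H => q.1 - q.2) := measurable_sub
  have hfac : (fun p : Ω × Ω => (X p.1 - X p.2, Y p.1 - Y p.2)) =
      Prod.map (fun q : G × G => q.1 - q.2) (fun q : H × H => q.1 - q.2) ∘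
        Equiv.prodProdProdComm G H G H ∘
          Prod.map (fun ω => (X ω, Y ω)) (fun ω => (X ω, Y ω)) := rfl
  rw [hfac, ← Measure.map_map (hsubG.prodMap hsubH) (by fun_prop),
    ← Measure.map_map measurable_prodProdProdComm (by fun_prop),
    ← Measure.map_prod_map _ _ (by fun_prop) (by fun_prop), hjoint,
    Measure.map_prodProdProdComm_prod, Measure.map_prod_map _ _ hsubG hsubH]

variable {v : ℝ≥0}

instance isNegInvariant_gaussianReal_prod :
    ((gaussianReal 0 v).prod (gaussianReal 0 v)).IsNegInvariant :=
  ⟨by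
    change Measure.map (Prod.map Neg.neg Neg.neg) _ = _
    rw [← Measure.map_prod_map _ _ measurable_neg measurable_neg, gaussianReal_map_neg, neg_zero]⟩

theorem gaussianReal_prod_eq_withDensity (hv : v ≠ 0) :
    (gaussianReal 0 v).prod (gaussianReal 0 v) = volume.withDensity fun p : ℝ × ℝ =>
      ENNReal.ofReal ((2 * π * v)⁻¹ * exp (-(p.1 ^ 2 + p.2 ^ 2) / (2 * v))) := by
  rw [gaussianReal_of_var_ne_zero 0 hv, prod_withDensity (measurable_gaussianPDF 0 v)
    (measurable_gaussianPDF 0 v), ← Measure.volume_eq_prod]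
  congr 1
  ext p
  have h2πv : 0 ≤ 2 * π * v := by positivity
  rw [gaussianPDF, gaussianPDF, ← ENNReal.ofReal_mul (gaussianPDFReal_nonneg 0 v _)]
  congr 1
  simp only [gaussianPDFReal, sub_zero]
  rw [mul_mul_mul_comm, ← mul_inv, Real.mul_self_sqrt h2πv, ← exp_add]
  ring_nf

theorem gaussianReal_prod_apply_sector_toReal (hv : v ≠ 0) {A : Set (ℝ × ℝ)}
    (hA : MeasurableSet A) {a b : ℝ} (ha : -π ≤ a) (hab : a ≤ b) (hb : b ≤ π)
    (hAS : ∀ ρ θ, 0 < ρ → θ ∈ Ioo (-π) π → ((ρ * cos θ, ρ * sin θ) ∈ A ↔ θ ∈ Ioo a b)) :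
    ((gaussianReal 0 v).prod (gaussianReal 0 v) A).toReal = (b - a) / (2 * π) := by
  rw [gaussianReal_prod_eq_withDensity hv]
  have : IsProbabilityMeasure (volume.withDensity fun p : ℝ × ℝ =>
      ENNReal.ofReal ((2 * π * v)⁻¹ * exp (-(p.1 ^ 2 + p.2 ^ 2) / (2 * v)))) := by
    rw [← gaussianReal_prod_eq_withDensity hv]; infer_instance
  rw [withDensity_radial_apply_eq_div
    (f := fun t => ENNReal.ofReal ((2 * π * v)⁻¹ * exp (-t / (2 * v)))) (by fun_prop) hA
    measurableSet_Ioo (Ioo_subset_Ioo ha hb) hAS, Real.volume_Ioo, ENNReal.toReal_div,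
    ENNReal.toReal_ofReal (by linarith), ENNReal.toReal_ofReal (by positivity)]

variable {α : ℝ}

theorem mem_sector_iff (hα : α ∈ Icc (-(π / 2)) (π / 2)) {ρ θ : ℝ} (hρ : 0 < ρ)
    (hθ : θ ∈ Ioo (-π) π) :
    (ρ * cos θ, ρ * sin θ) ∈ {q : ℝ × ℝ | 0 < q.1 ∧ 0 < sin α * q.1 + cos α * q.2} ↔
      θ ∈ Ioo (-α) (π / 2) := by
  simp only [mem_ofPred_eq, sin_mul_mul_cos_add_cos_mul_mul_sin, mul_pos_iff_of_pos_left hρ,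
    cos_pos_iff_of_mem_Ioo hθ]
  constructor
  · rintro ⟨hθ', hsin⟩
    rw [sin_pos_iff_of_mem_Ioo ⟨by linarith [hα.1, hθ'.1], by linarith [hα.2, hθ'.2]⟩] at hsin
    exact ⟨by linarith, hθ'.2⟩
  · rintro ⟨h₁, h₂⟩
    exact ⟨⟨by linarith [hα.2], h₂⟩, sin_pos_of_pos_of_lt_pi (by linarith) (by linarith [hα.2])⟩

theorem mem_sector_neg_iff (hα : α ∈ Icc (-(π / 2)) (π / 2)) {ρ θ : ℝ} (hρ : 0 < ρ)
    (hθ : θ ∈ Ioo (-π) π) :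
    (ρ * cos θ, ρ * sin θ) ∈ {q : ℝ × ℝ | 0 < q.1 ∧ 0 < -(sin α * q.1 + cos α * q.2)} ↔
      θ ∈ Ioo (-(π / 2)) (-α) := by
  simp only [mem_ofPred_eq, sin_mul_mul_cos_add_cos_mul_mul_sin, ← mul_neg, ← sin_neg,
    mul_pos_iff_of_pos_left hρ, cos_pos_iff_of_mem_Ioo hθ]
  constructor
  · rintro ⟨hθ', hsin⟩
    rw [sin_pos_iff_of_mem_Ioo ⟨by linarith [hα.2, hθ'.2], by linarith [hα.1, hθ'.1]⟩] at hsin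
    exact ⟨hθ'.1, by linarith⟩
  · rintro ⟨h₁, h₂⟩
    exact ⟨⟨h₁, by linarith [hα.1]⟩, sin_pos_of_pos_of_lt_pi (by linarith) (by linarith [hα.1])⟩

theorem gaussianReal_prod_setOf_mul_pos_toReal (hv : v ≠ 0) (hα : α ∈ Icc (-(π / 2)) (π / 2)) :
    ((gaussianReal 0 v).prod (gaussianReal 0 v)
      {q | 0 < q.1 * (sin α * q.1 + cos α * q.2)}).toReal = (π / 2 + α) / π := by
  rw [measure_setOf_mul_pos _ measurable_fst (by fun_prop) (fun _ => rfl)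
      (fun _ => by simp only [Prod.fst_neg, Prod.snd_neg]; ring),
    ENNReal.toReal_mul, ENNReal.toReal_ofNat,
    gaussianReal_prod_apply_sector_toReal hv (by measurability) (by linarith [hα.2, pi_pos])
      (by linarith [hα.1]) (by linarith [hα.1, pi_pos]) (fun _ _ hρ hθ => mem_sector_iff hα hρ hθ)]
  field_simp
  ring

theorem gaussianReal_prod_setOf_mul_neg_toReal (hv : v ≠ 0) (hα : α ∈ Icc (-(π / 2)) (π / 2)) :
    ((gaussianReal 0 v).prod (gaussianReal 0 v)
      {q | q.1 * (sin α * q.1 + cos α * q.2) < 0}).toReal = (π / 2 - α) / π := by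
  have hset : {q : ℝ × ℝ | q.1 * (sin α * q.1 + cos α * q.2) < 0} =
      {q | 0 < q.1 * -(sin α * q.1 + cos α * q.2)} := by
    ext; simp only [mem_ofPred_eq, mul_neg, neg_pos]
  rw [hset, measure_setOf_mul_pos _ measurable_fst (by fun_prop) (fun _ => rfl)
      (fun _ => by simp only [Prod.fst_neg, Prod.snd_neg]; ring),
    ENNReal.toReal_mul, ENNReal.toReal_ofNat,
    gaussianReal_prod_apply_sector_toReal hv (by measurability) (by linarith [pi_pos])
      (by linarith [hα.2]) (by linarith [hα.1, pi_pos])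
      (fun _ _ hρ hθ => mem_sector_neg_iff hα hρ hθ)]
  field_simp
  ring

end ProbabilityTheory

/-- Kendall's tau for the bivariate Gaussian: if `(Z₁, Z₂)` is a centered
Gaussian pair with standard normal marginals and correlation `r` (realized as
`Z₂ = r·Z₁ + √(1-r²)·W` with `Z₁, W` independent standard normals), then
`τ = P((Z₁-Z₁')(Z₂-Z₂') > 0) - P((Z₁-Z₁')(Z₂-Z₂') < 0) = (2/π)·arcsin r`,
where `(Z₁', Z₂')` is an independent copy (realized on the product space). -/
theorem kendall_tau_gaussian
    {Ω : Type*} [MeasurableSpace Ω] (μ : Measure Ω) [IsProbabilityMeasure μ]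
    (Z W : Ω → ℝ) (hZmeas : Measurable Z) (hWmeas : Measurable W)
    (hZ : Measure.map Z μ = gaussianReal 0 1)
    (hW : Measure.map W μ = gaussianReal 0 1)
    (hindep : IndepFun Z W μ)
    (r : ℝ) (hr : r ∈ Set.Icc (-1 : ℝ) 1) :
    ((μ.prod μ) {p | 0 < (Z p.1 - Z p.2) *
        ((r * Z p.1 + Real.sqrt (1 - r^2) * W p.1)
          - (r * Z p.2 + Real.sqrt (1 - r^2) * W p.2))}).toReal
    - ((μ.prod μ) {p | (Z p.1 - Z p.2) *
        ((r * Z p.1 + Real.sqrt (1 - r^2) * W p.1)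
          - (r * Z p.2 + Real.sqrt (1 - r^2) * W p.2)) < 0}).toReal
    = (2 / Real.pi) * Real.arcsin r := by
  set α := arcsin r
  have hα : α ∈ Icc (-(π / 2)) (π / 2) := ⟨neg_pi_div_two_le_arcsin r, arcsin_le_pi_div_two r⟩
  set V : Ω × Ω → ℝ × ℝ := fun p => (Z p.1 - Z p.2, W p.1 - W p.2)
  have hlaw : (μ.prod μ).map V = (gaussianReal 0 2).prod (gaussianReal 0 2) := by
    rw [hindep.map_prod_sub_prod_sub hZmeas hWmeas, hZ, hW, gaussianReal_prod_map_sub, sub_zero,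
      one_add_one_eq_two]
  have hevent : ∀ p : Ω × Ω, (Z p.1 - Z p.2) * ((r * Z p.1 + √(1 - r ^ 2) * W p.1) -
      (r * Z p.2 + √(1 - r ^ 2) * W p.2)) = (V p).1 * (sin α * (V p).1 + cos α * (V p).2) := by
    intro p
    rw [sin_arcsin hr.1 hr.2, cos_arcsin]
    ring
  have hV : Measurable V := by fun_prop
  simp only [hevent]
  rw [← preimage_ofPred_eq (p := fun q : ℝ × ℝ => 0 < q.1 * (sin α * q.1 + cos α * q.2)),
    ← preimage_ofPred_eq (p := fun q : ℝ × ℝ => q.1 * (sin α * q.1 + cos α * q.2) < 0),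
    ← Measure.map_apply hV (by measurability), ← Measure.map_apply hV (by measurability), hlaw,
    gaussianReal_prod_setOf_mul_pos_toReal two_ne_zero hα,
    gaussianReal_prod_setOf_mul_neg_toReal two_ne_zero hα]
  field_simp
  ring
end

section
/- Let P and Q be two nondegenerate (p+1)-dimensional centered Gaussian distributions with covariance matrices Ω̂ and Ω̃ respectively, where Ω̂ has minimum eigenvalue at least κ > 0. Then the KL divergence satisfies D_KL(P ∥ Q) ≤ (1/(2κ²))·‖Ω̂ − Ω̃‖_F² · ‖Ω̃⁻¹‖₂ · κ + higher-order terms; in particular, for Ω̃ with minimum eigenvalue at least κ, D_KL(P ∥ Q) ≤ (1/(2κ²))·‖Ω̂ − Ω̃‖_F². -/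
/-!
With `Δ = Ω₁ - Ω₂`, the divergence `D(P‖Q)` is at most the symmetrized divergence
`D(P‖Q) + D(Q‖P)`, because `D(Q‖P) ≥ 0` (apply `log x ≤ x - 1` to the eigenvalues of
`Ω₁^{-1/2} Ω₂ Ω₁^{-1/2}`). The symmetrized divergence is `½ tr(Ω₂⁻¹ Δ Ω₁⁻¹ Δ)`, and since
`Ωᵢ⁻¹ ≤ κ⁻¹ • 1` in the Loewner order it is at most `½ κ⁻² tr(Δ²) = ½ κ⁻² ‖Δ‖_F²`.
-/

open Matrix
open scoped MatrixOrder

namespace Matrix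

variable {n : Type*} [Fintype n] [DecidableEq n]

lemma smul_one_le_of_forall_mul_sum_sq_le {A : Matrix n n ℝ} (hA : A.IsSymm) {κ : ℝ}
    (h : ∀ x : n → ℝ, κ * ∑ i, x i ^ 2 ≤ x ⬝ᵥ (A *ᵥ x)) : κ • (1 : Matrix n n ℝ) ≤ A := by
  refine le_iff.mpr <| .of_dotProduct_mulVec_nonneg
    ((isHermitian_iff_isSymm.mpr hA).sub (isHermitian_one.smul (IsSelfAdjoint.all κ))) fun x => ?_
  simp only [star_trivial, sub_mulVec, smul_mulVec, one_mulVec, dotProduct_sub, dotProduct_smul,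
    smul_eq_mul, sub_nonneg]
  simpa [dotProduct, sq] using h x

omit [Fintype n] in
lemma posDef_of_smul_one_le {A : Matrix n n ℝ} {κ : ℝ} (hκ : 0 < κ) (h : κ • 1 ≤ A) :
    A.PosDef := by
  have hsub : (A - κ • 1).PosSemidef := le_iff.mp h
  simpa using PosDef.posSemidef_add hsub (PosDef.one.smul hκ)

lemma PosDef.sqrt_inv_mul_self_mul_sqrt_inv {A : Matrix n n ℝ} (hA : A.PosDef) :
    CFC.sqrt A⁻¹ * A * CFC.sqrt A⁻¹ = 1 := by
  have := CFC.conjSqrt_ringInverse_self A (isStrictlyPositive_iff_posDef.mpr hA)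
  rwa [CFC.conjSqrt_apply, ← nonsing_inv_eq_ringInverse] at this

lemma inv_le_smul_one_of_smul_one_le {A : Matrix n n ℝ} {κ : ℝ} (hκ : 0 < κ) (h : κ • 1 ≤ A) :
    A⁻¹ ≤ κ⁻¹ • 1 := by
  have hA := posDef_of_smul_one_le hκ h
  have hκA : κ • A⁻¹ ≤ 1 := by
    have := conjugate_le_conjugate_of_nonneg h (CFC.sqrt_nonneg A⁻¹)
    rwa [hA.sqrt_inv_mul_self_mul_sqrt_inv, mul_smul_one, smul_mul_assoc,
      CFC.sqrt_mul_sqrt_self _ hA.inv.posSemidef.nonneg] at this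
  have := smul_le_smul_of_nonneg_left hκA (inv_nonneg.mpr hκ.le)
  rwa [smul_smul, inv_mul_cancel₀ hκ.ne', one_smul] at this

lemma trace_mul_nonneg {P M : Matrix n n ℝ} (hP : 0 ≤ P) (hM : 0 ≤ M) : 0 ≤ (P * M).trace := by
  have hPM : (P * M).trace = (CFC.sqrt P * M * CFC.sqrt P).trace := by
    rw [trace_mul_cycle, CFC.sqrt_mul_sqrt_self P hP]
  rw [hPM]
  exact (nonneg_iff_posSemidef.mp
    (conjugate_nonneg_of_nonneg hM (CFC.sqrt_nonneg P))).trace_nonneg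

lemma trace_mul_le_trace_mul_of_le {A B M : Matrix n n ℝ} (hAB : A ≤ B) (hM : 0 ≤ M) :
    (A * M).trace ≤ (B * M).trace := by
  rw [← sub_nonneg, ← trace_sub, ← sub_mul]
  exact trace_mul_nonneg (sub_nonneg.mpr hAB) hM

lemma trace_inv_mul_le {A M : Matrix n n ℝ} {κ : ℝ} (hκ : 0 < κ) (h : κ • 1 ≤ A) (hM : 0 ≤ M) :
    (A⁻¹ * M).trace ≤ κ⁻¹ * M.trace := by
  simpa using trace_mul_le_trace_mul_of_le (inv_le_smul_one_of_smul_one_le hκ h) hM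

lemma PosDef.log_det_le_trace_sub_card {C : Matrix n n ℝ} (hC : C.PosDef) :
    Real.log C.det ≤ C.trace - Fintype.card n := by
  have hpos := hC.eigenvalues_pos
  calc Real.log C.det = ∑ i, Real.log (hC.1.eigenvalues i) := by
        rw [hC.1.det_eq_prod_eigenvalues]
        simpa using Real.log_prod fun i _ => (hpos i).ne'
    _ ≤ ∑ i, (hC.1.eigenvalues i - 1) :=
        Finset.sum_le_sum fun i _ => Real.log_le_sub_one_of_pos (hpos i)
    _ = C.trace - Fintype.card n := by
        simp [hC.1.trace_eq_sum_eigenvalues, Finset.sum_sub_distrib]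

lemma PosDef.log_det_sub_log_det_le_trace_inv_mul_sub_card {A B : Matrix n n ℝ} (hA : A.PosDef)
    (hB : B.PosDef) :
    Real.log B.det - Real.log A.det ≤ (A⁻¹ * B).trace - Fintype.card n := by
  set T := CFC.sqrt A⁻¹
  have hTT : T * T = A⁻¹ := CFC.sqrt_mul_sqrt_self _ hA.inv.posSemidef.nonneg
  have hTAT : T.det * A.det * T.det = 1 := by
    rw [← det_mul, ← det_mul, hA.sqrt_inv_mul_self_mul_sqrt_inv, det_one]
  have hT : IsUnit T := (isUnit_iff_isUnit_det T).mpr <| .mk0 _ fun h0 => by simp [h0] at hTAT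
  have hC : (T * B * T).PosDef := by
    have := (IsUnit.posDef_star_left_conjugate_iff hT).mpr hB
    rwa [(CFC.sqrt_nonneg A⁻¹).isSelfAdjoint.star_eq] at this
  have hdet : (T * B * T).det = B.det / A.det := by
    rw [eq_div_iff hA.det_pos.ne', det_mul, det_mul]
    linear_combination B.det * hTAT
  have htrace : (T * B * T).trace = (A⁻¹ * B).trace := by
    rw [trace_mul_cycle, hTT]
  have := hC.log_det_le_trace_sub_card
  rwa [hdet, Real.log_div hB.det_pos.ne' hA.det_pos.ne', htrace] at this

lemma trace_inv_mul_add_trace_inv_mul {A B : Matrix n n ℝ} (hA : IsUnit A.det) (hB : IsUnit B.det) :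
    (A⁻¹ * B).trace + (B⁻¹ * A).trace - 2 * Fintype.card n
      = (B⁻¹ * (A - B) * A⁻¹ * (A - B)).trace := by
  have hdiff : B⁻¹ * (A - B) * A⁻¹ = B⁻¹ - A⁻¹ := by
    rw [mul_sub, sub_mul, mul_assoc, mul_nonsing_inv _ hA, mul_one, nonsing_inv_mul _ hB, one_mul]
  have : B⁻¹ * (A - B) * A⁻¹ * (A - B) = B⁻¹ * A + A⁻¹ * B - 1 - 1 := by
    rw [hdiff, sub_mul, mul_sub, mul_sub, nonsing_inv_mul _ hB, nonsing_inv_mul _ hA]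
    abel
  rw [this, trace_sub, trace_sub, trace_add, trace_one]
  ring

lemma trace_inv_mul_mul_inv_mul_le {A B Δ : Matrix n n ℝ} {κ : ℝ} (hκ : 0 < κ) (hA : κ • 1 ≤ A)
    (hB : κ • 1 ≤ B) (hΔ : IsSelfAdjoint Δ) :
    (B⁻¹ * Δ * A⁻¹ * Δ).trace ≤ (Δ * Δ).trace / κ ^ 2 := by
  have hΔAΔ : 0 ≤ Δ * A⁻¹ * Δ :=
    hΔ.conjugate_nonneg (posDef_of_smul_one_le hκ hA).inv.posSemidef.nonneg
  have hΔΔ : 0 ≤ Δ * Δ := by simpa [hΔ.star_eq] using star_mul_self_nonneg Δ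
  calc (B⁻¹ * Δ * A⁻¹ * Δ).trace = (B⁻¹ * (Δ * A⁻¹ * Δ)).trace := by simp only [mul_assoc]
    _ ≤ κ⁻¹ * (Δ * A⁻¹ * Δ).trace := trace_inv_mul_le hκ hB hΔAΔ
    _ = κ⁻¹ * (A⁻¹ * (Δ * Δ)).trace := by rw [mul_assoc, trace_mul_comm, mul_assoc]
    _ ≤ κ⁻¹ * (κ⁻¹ * (Δ * Δ).trace) := by gcongr; exact trace_inv_mul_le hκ hA hΔΔ
    _ = (Δ * Δ).trace / κ ^ 2 := by field_simp

omit [DecidableEq n] in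
lemma IsSymm.trace_mul_self {A : Matrix n n ℝ} (hA : A.IsSymm) :
    (A * A).trace = ∑ i, ∑ j, A i j ^ 2 := by
  simp only [trace, diag_apply, mul_apply, sq, hA.apply]

end Matrix

/-- KL divergence bound between two centered Gaussians: if
`P = N(0, Ω̂)` and `Q = N(0, Ω̃)` are nondegenerate `(p+1)`-dimensional centered
Gaussians whose covariance matrices both have minimum eigenvalue at least
`κ > 0` (expressed via the quadratic-form lower bound), then
`D_KL(P‖Q) = ½(tr(Ω̃⁻¹Ω̂) - (p+1) + log det Ω̃ - log det Ω̂)`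
is at most `(1/(2κ²))·‖Ω̂ - Ω̃‖_F²`. -/
theorem gaussian_kl_bound (p : ℕ)
    (Ω₁ Ω₂ : Matrix (Fin (p+1)) (Fin (p+1)) ℝ)
    (hΩ₁sym : Ω₁.IsSymm) (hΩ₂sym : Ω₂.IsSymm)
    (κ : ℝ) (hκ : 0 < κ)
    (hΩ₁ : ∀ x : Fin (p+1) → ℝ, κ * ∑ i, (x i)^2 ≤ x ⬝ᵥ (Ω₁ *ᵥ x))
    (hΩ₂ : ∀ x : Fin (p+1) → ℝ, κ * ∑ i, (x i)^2 ≤ x ⬝ᵥ (Ω₂ *ᵥ x)) :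
    (1/2) * ((Ω₂⁻¹ * Ω₁).trace - (p+1)
        + Real.log Ω₂.det - Real.log Ω₁.det)
      ≤ (1 / (2 * κ^2)) * ∑ i, ∑ j, (Ω₁ i j - Ω₂ i j)^2 := by
  have h₁ := smul_one_le_of_forall_mul_sum_sq_le hΩ₁sym hΩ₁
  have h₂ := smul_one_le_of_forall_mul_sum_sq_le hΩ₂sym hΩ₂
  have hΩ₁pd := posDef_of_smul_one_le hκ h₁
  have hΩ₂pd := posDef_of_smul_one_le hκ h₂
  have hΔ : (Ω₁ - Ω₂).IsSymm := hΩ₁sym.sub hΩ₂sym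
  have gibbs := hΩ₁pd.log_det_sub_log_det_le_trace_inv_mul_sub_card hΩ₂pd
  have symmetrized :=
    trace_inv_mul_add_trace_inv_mul hΩ₁pd.det_pos.ne'.isUnit hΩ₂pd.det_pos.ne'.isUnit
  have bound := trace_inv_mul_mul_inv_mul_le hκ h₁ h₂ (isHermitian_iff_isSymm.mpr hΔ)
  rw [hΔ.trace_mul_self] at bound
  simp only [Fintype.card_fin, Nat.cast_add, Nat.cast_one, Matrix.sub_apply]
    at gibbs symmetrized bound
  calc _ ≤ 1 / 2 * ((∑ i, ∑ j, (Ω₁ i j - Ω₂ i j) ^ 2) / κ ^ 2) := by linarith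
    _ = _ := by ring
end
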